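/- Suppose Z is independent of the pair (X,Y), k is bounded, and E[|ζ(X₁,X₂)η(Y₁,Y₂)|] < ∞, E[|ζ(X₁,X₂)|] < ∞, E[|η(Y₁,Y₂)|] < ∞, E[|ζ(X₁,X₂)η(Y₁,Y₃)|] < ∞. Then the random-lifter dependence measure factorizes as T_{ζ,η,κ_b}(X,Y) = HSIC(ω,ζ,η) · E[κ_b(Z₁,Z₂)], where Z₁, Z₂ are i.i.d. copies of Z. -/
import Mathlib


open MeasureTheory

noncomputable section

/-- The Hilbert–Schmidt independence criterion `HSIC(ω,ζ,η)`, expressed through integrals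
against the joint law `ω` of `(X,Y)` (the pairs `(Xᵢ,Yᵢ)` are i.i.d. with law `ω`). -/
def HSICm {𝒳 𝒴 : Type*} [MeasurableSpace 𝒳] [MeasurableSpace 𝒴]
    (ω : Measure (𝒳 × 𝒴)) (ζ : 𝒳 → 𝒳 → ℝ) (η : 𝒴 → 𝒴 → ℝ) : ℝ :=
  (∫ p, ζ p.1.1 p.2.1 * η p.1.2 p.2.2 ∂(ω.prod ω))
  + (∫ p, ζ p.1.1 p.2.1 ∂(ω.prod ω)) * (∫ p, η p.1.2 p.2.2 ∂(ω.prod ω))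
  - 2 * ∫ t, ζ t.1.1 t.2.1.1 * η t.1.2 t.2.2.2 ∂(ω.prod (ω.prod ω))

/-- The random-lifter dependence measure `T_{ζ,η,κ_b}(X,Y)`, expressed through integrals
against the law `ω` of `(X,Y)` and the law `μZ` of the independent lifter `Z`
(the triples `(Xᵢ,Yᵢ,Zᵢ)` are i.i.d. with law `ω ⊗ μZ`). -/
def Tlift {𝒳 𝒴 : Type*} [MeasurableSpace 𝒳] [MeasurableSpace 𝒴]
    (ζ : 𝒳 → 𝒳 → ℝ) (η : 𝒴 → 𝒴 → ℝ) (k : ℝ → ℝ) (b : ℝ)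
    (ω : Measure (𝒳 × 𝒴)) (μZ : Measure ℝ) : ℝ :=
  (∫ w₁, (∫ w₂, ζ w₁.1.1 w₂.1.1 * (η w₁.1.2 w₂.1.2 * k ((w₁.2 - w₂.2) / b))
      ∂(ω.prod μZ)) ∂(ω.prod μZ))
  + (∫ p, ζ p.1.1 p.2.1 ∂(ω.prod ω)) *
      (∫ w₁, (∫ w₂, η w₁.1.2 w₂.1.2 * k ((w₁.2 - w₂.2) / b) ∂(ω.prod μZ)) ∂(ω.prod μZ))
  - 2 * ∫ w₁, (∫ w₂, (∫ w₃, ζ w₁.1.1 w₂.1.1 * (η w₁.1.2 w₃.1.2 * k ((w₁.2 - w₃.2) / b))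
      ∂(ω.prod μZ)) ∂(ω.prod μZ)) ∂(ω.prod μZ)

/-- If the lifter `Z` is independent of `(X,Y)` (so that the triples
`(Xᵢ,Yᵢ,Zᵢ)` have law `ω ⊗ μZ`), `k` is bounded, and the displayed absolute moments are
finite, then the random-lifter dependence measure factorizes as
`T_{ζ,η,κ_b}(X,Y) = HSIC(ω,ζ,η) · E[κ_b(Z₁,Z₂)]`. -/
theorem statement3 {𝒳 𝒴 : Type*} [MeasurableSpace 𝒳] [MeasurableSpace 𝒴]
    (ζ : 𝒳 → 𝒳 → ℝ) (η : 𝒴 → 𝒴 → ℝ) (k : ℝ → ℝ) (b : ℝ) (hb : 0 < b)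
    (hζ_meas : Measurable fun p : 𝒳 × 𝒳 => ζ p.1 p.2)
    (hη_meas : Measurable fun p : 𝒴 × 𝒴 => η p.1 p.2)
    (hζ_symm : ∀ x x', ζ x x' = ζ x' x)
    (hη_symm : ∀ y y', η y y' = η y' y)
    (hk_meas : Measurable k)
    (Ck : ℝ) (hk_bdd : ∀ u, |k u| ≤ Ck)
    (hk_nonneg : ∀ u, 0 ≤ k u) (hk_int : ∫ u, k u = 1)
    (hk_symm : ∀ u, k (-u) = k u)
    (ω : Measure (𝒳 × 𝒴)) [IsProbabilityMeasure ω]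
    (μZ : Measure ℝ) [IsProbabilityMeasure μZ]
    -- finite moments: E|ζη| < ∞, E|ζ| < ∞, E|η| < ∞, E|ζ(X₁,X₂)η(Y₁,Y₃)| < ∞
    (h_int₁ : Integrable (fun p : (𝒳 × 𝒴) × (𝒳 × 𝒴) =>
      ζ p.1.1 p.2.1 * η p.1.2 p.2.2) (ω.prod ω))
    (h_int₂ : Integrable (fun p : (𝒳 × 𝒴) × (𝒳 × 𝒴) => ζ p.1.1 p.2.1) (ω.prod ω))
    (h_int₃ : Integrable (fun p : (𝒳 × 𝒴) × (𝒳 × 𝒴) => η p.1.2 p.2.2) (ω.prod ω))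
    (h_int₄ : Integrable (fun t : (𝒳 × 𝒴) × (𝒳 × 𝒴) × (𝒳 × 𝒴) =>
      ζ t.1.1 t.2.1.1 * η t.1.2 t.2.2.2) (ω.prod (ω.prod ω))) :
    Tlift ζ η k b ω μZ =
      HSICm ω ζ η * ∫ q, k ((q.1 - q.2) / b) ∂(μZ.prod μZ) := by

  -- integrability of the kernel factor on the product space
  have hk_int2 : Integrable (fun q : ℝ × ℝ => k ((q.1 - q.2) / b)) (μZ.prod μZ) := by
    refine ⟨(hk_meas.comp ((measurable_fst.sub measurable_snd).div_const b)).aestronglyMeasurable,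
      HasFiniteIntegral.of_bounded (C := Ck) ?_⟩
    filter_upwards with q
    simpa [Real.norm_eq_abs] using hk_bdd ((q.1 - q.2) / b)
  have hE : (∫ q, k ((q.1 - q.2) / b) ∂(μZ.prod μZ))
      = ∫ z₁, ∫ z₂, k ((z₁ - z₂) / b) ∂μZ ∂μZ := integral_prod _ hk_int2
  -- rewrite HSIC pieces as iterated integrals
  have hHA : (∫ p, ζ p.1.1 p.2.1 * η p.1.2 p.2.2 ∂(ω.prod ω))
      = ∫ p, ∫ q, ζ p.1 q.1 * η p.2 q.2 ∂ω ∂ω := integral_prod _ h_int₁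
  have hHD : (∫ p, η p.1.2 p.2.2 ∂(ω.prod ω))
      = ∫ p, ∫ q, η p.2 q.2 ∂ω ∂ω := integral_prod _ h_int₃
  have hH3 : (∫ t, ζ t.1.1 t.2.1.1 * η t.1.2 t.2.2.2 ∂(ω.prod (ω.prod ω)))
      = ∫ p, (∫ q, ζ p.1 q.1 ∂ω) * (∫ q, η p.2 q.2 ∂ω) ∂ω := by
    rw [integral_prod _ h_int₄]
    congr 1
    funext p
    exact integral_prod_mul (fun a : 𝒳 × 𝒴 => ζ p.1 a.1) (fun c : 𝒳 × 𝒴 => η p.2 c.2)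
  -- first Tlift term
  have hT1 : (∫ w₁, (∫ w₂, ζ w₁.1.1 w₂.1.1 * (η w₁.1.2 w₂.1.2 * k ((w₁.2 - w₂.2) / b))
        ∂(ω.prod μZ)) ∂(ω.prod μZ))
      = (∫ p, ∫ q, ζ p.1 q.1 * η p.2 q.2 ∂ω ∂ω) * (∫ z₁, ∫ z₂, k ((z₁ - z₂) / b) ∂μZ ∂μZ) := by
    have step : ∀ w₁ : (𝒳 × 𝒴) × ℝ,
        (∫ w₂, ζ w₁.1.1 w₂.1.1 * (η w₁.1.2 w₂.1.2 * k ((w₁.2 - w₂.2) / b)) ∂(ω.prod μZ))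
        = (∫ q, ζ w₁.1.1 q.1 * η w₁.1.2 q.2 ∂ω) * (∫ z, k ((w₁.2 - z) / b) ∂μZ) := by
      intro w₁
      rw [← integral_prod_mul (fun q : 𝒳 × 𝒴 => ζ w₁.1.1 q.1 * η w₁.1.2 q.2)
        (fun z => k ((w₁.2 - z) / b))]
      congr 1
      funext w₂
      ring
    simp only [step]
    exact integral_prod_mul (fun p : 𝒳 × 𝒴 => ∫ q, ζ p.1 q.1 * η p.2 q.2 ∂ω)
      (fun z₁ => ∫ z₂, k ((z₁ - z₂) / b) ∂μZ)
  -- second Tlift term (η part)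
  have hT2 : (∫ w₁, (∫ w₂, η w₁.1.2 w₂.1.2 * k ((w₁.2 - w₂.2) / b) ∂(ω.prod μZ)) ∂(ω.prod μZ))
      = (∫ p, ∫ q, η p.2 q.2 ∂ω ∂ω) * (∫ z₁, ∫ z₂, k ((z₁ - z₂) / b) ∂μZ ∂μZ) := by
    have step : ∀ w₁ : (𝒳 × 𝒴) × ℝ,
        (∫ w₂, η w₁.1.2 w₂.1.2 * k ((w₁.2 - w₂.2) / b) ∂(ω.prod μZ))
        = (∫ q, η w₁.1.2 q.2 ∂ω) * (∫ z, k ((w₁.2 - z) / b) ∂μZ) := by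
      intro w₁
      exact integral_prod_mul (fun q : 𝒳 × 𝒴 => η w₁.1.2 q.2) (fun z => k ((w₁.2 - z) / b))
    simp only [step]
    exact integral_prod_mul (fun p : 𝒳 × 𝒴 => ∫ q, η p.2 q.2 ∂ω)
      (fun z₁ => ∫ z₂, k ((z₁ - z₂) / b) ∂μZ)
  -- third Tlift term
  have hT3 : (∫ w₁, (∫ w₂, (∫ w₃, ζ w₁.1.1 w₂.1.1 * (η w₁.1.2 w₃.1.2 * k ((w₁.2 - w₃.2) / b))
        ∂(ω.prod μZ)) ∂(ω.prod μZ)) ∂(ω.prod μZ))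
      = (∫ p, (∫ q, ζ p.1 q.1 ∂ω) * (∫ q, η p.2 q.2 ∂ω) ∂ω)
        * (∫ z₁, ∫ z₂, k ((z₁ - z₂) / b) ∂μZ ∂μZ) := by
    have step1 : ∀ (w₁ : (𝒳 × 𝒴) × ℝ) (w₂ : (𝒳 × 𝒴) × ℝ),
        (∫ w₃, ζ w₁.1.1 w₂.1.1 * (η w₁.1.2 w₃.1.2 * k ((w₁.2 - w₃.2) / b)) ∂(ω.prod μZ))
        = ζ w₁.1.1 w₂.1.1 * ((∫ q, η w₁.1.2 q.2 ∂ω) * (∫ z, k ((w₁.2 - z) / b) ∂μZ)) := by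
      intro w₁ w₂
      rw [← integral_prod_mul (fun q : 𝒳 × 𝒴 => η w₁.1.2 q.2) (fun z => k ((w₁.2 - z) / b)),
        integral_const_mul]
    simp only [step1]
    have step2 : ∀ w₁ : (𝒳 × 𝒴) × ℝ,
        (∫ w₂, ζ w₁.1.1 w₂.1.1 * ((∫ q, η w₁.1.2 q.2 ∂ω) * (∫ z, k ((w₁.2 - z) / b) ∂μZ))
          ∂(ω.prod μZ))
        = ((∫ q, ζ w₁.1.1 q.1 ∂ω) * (∫ q, η w₁.1.2 q.2 ∂ω)) * (∫ z, k ((w₁.2 - z) / b) ∂μZ) := by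
      intro w₁
      have hfst : (∫ w₂ : (𝒳 × 𝒴) × ℝ, ζ w₁.1.1 w₂.1.1 ∂(ω.prod μZ))
          = ∫ q, ζ w₁.1.1 q.1 ∂ω := by
        have h := integral_prod_mul (μ := ω) (ν := μZ)
          (fun q : 𝒳 × 𝒴 => ζ w₁.1.1 q.1) (fun _z : ℝ => (1:ℝ))
        simpa using h
      rw [integral_mul_const, hfst]
      ring
    simp only [step2]
    exact integral_prod_mul
      (fun p : 𝒳 × 𝒴 => (∫ q, ζ p.1 q.1 ∂ω) * (∫ q, η p.2 q.2 ∂ω))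
      (fun z₁ => ∫ z₂, k ((z₁ - z₂) / b) ∂μZ)
  unfold Tlift HSICm
  rw [hT1, hT2, hT3, hHA, hHD, hH3, hE]
  ring
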